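/- arXiv:1204.3176 — 2 statements merged into one kernel-verified Lean document; each statement's English description precedes it below -/
import Mathlib

section
/- Let d ≥ 1 and n ≥ 1 be integers and let γ : ℕ → ℝ satisfy: (i) γ(t) ≤ γ(0) for all 1 ≤ t ≤ d−1, and (ii) the per-interval concavity condition γ(d·k − δ) + γ(d·k + δ) ≤ 2·γ(d·k) for all integers k ≥ 1 and 1 ≤ δ ≤ d−1 (this holds with equality when γ is linear on each interval of length d, the paper's linear-interpolation assumption valid when d is much smaller than the maximal correlation interval). Then S(n·d, 1) ≤ d²·S(n, d), where S(n, d) = Σ_{k=1}^{n} Σ_{l=1}^{n} γ(d·|k−l|). Equivalently, the variance of the average of all nd consecutive samples is at most that of the average of the n samples taken every d cycles: σ²(ȳ_a) ≤ σ²(ȳ_b). (Right inequality of Theorem 5.2 / Eq. (23).) -/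
/-!
Cut the `n * d` fine indices into `n` blocks of `d` consecutive ones, `k = d * a + i`. The lag of
`(k, l)` is then `d * (a - b) + (i - j)` with `|i - j| < d`, and pairing `(i, j)` with `(j, i)`
turns the concavity condition (condition (i) for the diagonal blocks `a = b`) into
`γ |d M + e| + γ |d M - e| ≤ 2 γ (d |M|)`. Hence each pair of blocks contributes at most
`d² γ (d |a - b|)` to `S(n d, 1)`.
-/

open Finset

namespace Finset

theorem sum_range_mul_eq_sum_sum {M : Type*} [AddCommMonoid M] (f : ℕ → M) (n d : ℕ) :
    ∑ k ∈ range (n * d), f k = ∑ a ∈ range n, ∑ i ∈ range d, f (d * a + i) := by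
  induction n with
  | zero => simp
  | succ n ih => rw [Nat.succ_mul, sum_range_add, ih, sum_range_succ, mul_comm n d]

theorem sum_Icc_one_eq_sum_range {M : Type*} [AddCommMonoid M] (f : ℕ → M) (n : ℕ) :
    ∑ k ∈ Icc 1 n, f k = ∑ k ∈ range n, f (k + 1) := by
  rw [← Ico_add_one_right_eq_Icc, sum_Ico_eq_sum_range, add_tsub_cancel_right]
  simp only [add_comm]

theorem sum_sum_Icc_one_sub {M : Type*} [AddCommMonoid M] (G : ℤ → M) (n : ℕ) :
    ∑ k ∈ Icc 1 n, ∑ l ∈ Icc 1 n, G (k - l) = ∑ k ∈ range n, ∑ l ∈ range n, G (k - l) := by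
  simp only [sum_Icc_one_eq_sum_range, Nat.cast_add, add_sub_add_right_eq_sub]

theorem sum_sum_range_mul_sub {M : Type*} [AddCommMonoid M] (G : ℤ → M) (n d : ℕ) :
    ∑ k ∈ range (n * d), ∑ l ∈ range (n * d), G (k - l) =
      ∑ a ∈ range n, ∑ b ∈ range n, ∑ i ∈ range d, ∑ j ∈ range d,
        G (d * ((a : ℤ) - b) + ((i : ℤ) - j)) := by
  simp only [sum_range_mul_eq_sum_sum]
  refine sum_congr rfl fun a _ => ?_
  rw [sum_comm]
  refine sum_congr rfl fun b _ => sum_congr rfl fun i _ => sum_congr rfl fun j _ => ?_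
  push_cast
  ring_nf

theorem sum_sum_le_card_sq_mul {ι R : Type*} [CommRing R] [LinearOrder R] [IsStrictOrderedRing R]
    (s : Finset ι) (F : ι → ι → R) (B : R) (h : ∀ i ∈ s, ∀ j ∈ s, F i j + F j i ≤ 2 * B) :
    ∑ i ∈ s, ∑ j ∈ s, F i j ≤ #s ^ 2 * B := by
  have : 2 * ∑ i ∈ s, ∑ j ∈ s, F i j ≤ 2 * (#s ^ 2 * B) :=
    calc 2 * ∑ i ∈ s, ∑ j ∈ s, F i j = ∑ i ∈ s, ∑ j ∈ s, (F i j + F j i) := by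
          rw [two_mul]; nth_rewrite 2 [sum_comm]; simp only [sum_add_distrib]
      _ ≤ ∑ i ∈ s, ∑ j ∈ s, 2 * B := sum_le_sum fun i hi => sum_le_sum fun j hj => h i hi j hj
      _ = 2 * (#s ^ 2 * B) := by simp only [sum_const, nsmul_eq_mul]; ring
  linarith

end Finset

/-- The paper's `S(n, d)`. -/
noncomputable def autocovSum (γ : ℕ → ℝ) (n d : ℕ) : ℝ :=
  ∑ k ∈ Icc 1 n, ∑ l ∈ Icc 1 n, γ (d * ((k : ℤ) - (l : ℤ)).natAbs)

section Concave

variable {γ : ℕ → ℝ} {d : ℕ} (hγ0 : ∀ t, 1 ≤ t → t ≤ d - 1 → γ t ≤ γ 0)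
  (hconc : ∀ k, 1 ≤ k → ∀ δ, 1 ≤ δ → δ ≤ d - 1 → γ (d * k - δ) + γ (d * k + δ) ≤ 2 * γ (d * k))
include hγ0 hconc

theorem apply_natAbs_add_add_apply_natAbs_sub_le (M e : ℤ) (he : e.natAbs < d) :
    γ (d * M + e).natAbs + γ (d * M - e).natAbs ≤ 2 * γ (d * M.natAbs) := by
  obtain rfl | hM := eq_or_ne M 0
  · have : γ e.natAbs ≤ γ 0 := by
      obtain h | h := Nat.eq_zero_or_pos e.natAbs
      · rw [h]
      · exact hγ0 _ h (by omega)
    simp only [mul_zero, zero_add, zero_sub, Int.natAbs_neg, Int.natAbs_zero]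
    linarith
  · have hmid : γ (d * M.natAbs - e.natAbs) + γ (d * M.natAbs + e.natAbs) ≤
        2 * γ (d * M.natAbs) := by
      obtain h | h := Nat.eq_zero_or_pos e.natAbs
      · simp [h, two_mul]
      · exact hconc _ (by omega) _ h (by omega)
    have hdM : d ≤ d * M.natAbs := Nat.le_mul_of_pos_right d (by omega)
    have hDM : (d * M).natAbs = d * M.natAbs := by simp [Int.natAbs_mul]
    obtain ⟨h₁, h₂⟩ | ⟨h₁, h₂⟩ :
        (d * M + e).natAbs = d * M.natAbs + e.natAbs ∧
            (d * M - e).natAbs = d * M.natAbs - e.natAbs ∨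
          (d * M + e).natAbs = d * M.natAbs - e.natAbs ∧
            (d * M - e).natAbs = d * M.natAbs + e.natAbs := by
      generalize (d : ℤ) * M = D at hDM ⊢; omega
    all_goals rw [h₁, h₂]; linarith

theorem sum_sum_range_apply_natAbs_le (M : ℤ) :
    ∑ i ∈ range d, ∑ j ∈ range d, γ (d * M + ((i : ℤ) - j)).natAbs ≤
      d ^ 2 * γ (d * M.natAbs) := by
  simpa using sum_sum_le_card_sq_mul (range d) _ _ fun i hi j hj => by
    rw [show d * M + ((j : ℤ) - i) = d * M - ((i : ℤ) - j) by ring]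
    exact apply_natAbs_add_add_apply_natAbs_sub_le hγ0 hconc M _ (by simp at hi hj; omega)

theorem autocovSum_mul_one_le (n : ℕ) : autocovSum γ (n * d) 1 ≤ d ^ 2 * autocovSum γ n d := by
  unfold autocovSum
  calc ∑ k ∈ Icc 1 (n * d), ∑ l ∈ Icc 1 (n * d), γ (1 * ((k : ℤ) - l).natAbs)
      = ∑ a ∈ range n, ∑ b ∈ range n, ∑ i ∈ range d, ∑ j ∈ range d,
          γ (d * ((a : ℤ) - b) + ((i : ℤ) - j)).natAbs := by
        simp only [one_mul]
        rw [sum_sum_Icc_one_sub (fun z => γ z.natAbs), sum_sum_range_mul_sub (fun z => γ z.natAbs)]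
    _ ≤ ∑ a ∈ range n, ∑ b ∈ range n, d ^ 2 * γ (d * ((a : ℤ) - b).natAbs) := by
        gcongr with a _ b _
        exact sum_sum_range_apply_natAbs_le hγ0 hconc _
    _ = d ^ 2 * ∑ k ∈ Icc 1 n, ∑ l ∈ Icc 1 n, γ (d * ((k : ℤ) - l).natAbs) := by
        rw [sum_sum_Icc_one_sub (fun z => γ (d * z.natAbs))]
        simp only [mul_sum]

end Concave

theorem full_variance_upper_bound_general (γ : ℕ → ℝ) (n d : ℕ) (hd : 1 ≤ d)
    (hγ0 : ∀ t, 1 ≤ t → t ≤ d - 1 → γ t ≤ γ 0)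
    (hconc : ∀ k, 1 ≤ k → ∀ δ, 1 ≤ δ → δ ≤ d - 1 →
      γ (d * k - δ) + γ (d * k + δ) ≤ 2 * γ (d * k)) :
    (∑ k ∈ Icc 1 (n * d), ∑ l ∈ Icc 1 (n * d), γ (1 * ((k : ℤ) - (l : ℤ)).natAbs)) ≤
      (d : ℝ) ^ 2 *
        (∑ k ∈ Icc 1 n, ∑ l ∈ Icc 1 n, γ (d * ((k : ℤ) - (l : ℤ)).natAbs)) ∧
    (∑ k ∈ Icc 1 (n * d), ∑ l ∈ Icc 1 (n * d), γ (1 * ((k : ℤ) - (l : ℤ)).natAbs)) /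
        ((n : ℝ) * (d : ℝ)) ^ 2 ≤
      (∑ k ∈ Icc 1 n, ∑ l ∈ Icc 1 n, γ (d * ((k : ℤ) - (l : ℤ)).natAbs)) / (n : ℝ) ^ 2 := by
  have hS : autocovSum γ (n * d) 1 ≤ d ^ 2 * autocovSum γ n d := autocovSum_mul_one_le hγ0 hconc n
  refine ⟨hS, ?_⟩
  have hd₂ : (d : ℝ) ^ 2 ≠ 0 := by positivity
  calc autocovSum γ (n * d) 1 / ((n : ℝ) * d) ^ 2
      ≤ d ^ 2 * autocovSum γ n d / ((n : ℝ) * d) ^ 2 := by gcongr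
    _ = autocovSum γ n d / (n : ℝ) ^ 2 := by
        rw [mul_pow, mul_comm ((n : ℝ) ^ 2), mul_div_mul_left _ _ hd₂]

/-- If `γ(t) ≤ γ(0)` for `1 ≤ t ≤ d−1` and `γ` satisfies the per-interval concavity
condition `γ(d·k − δ) + γ(d·k + δ) ≤ 2·γ(d·k)` for `k ≥ 1`, `1 ≤ δ ≤ d−1`, then
`S(n·d, 1) ≤ d²·S(n, d)` where `S(n, d) = Σ_{k=1}^{n} Σ_{l=1}^{n} γ(d·|k−l|)`;
equivalently the variance `σ²(ȳ_a) = S(nd,1)/(nd)²` of the full average is at most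
the variance `σ²(ȳ_b) = S(n,d)/n²` of the coarse average. -/
theorem full_variance_upper_bound (γ : ℕ → ℝ) (n d : ℕ) (hn : 1 ≤ n) (hd : 1 ≤ d)
    (hγ0 : ∀ t, 1 ≤ t → t ≤ d - 1 → γ t ≤ γ 0)
    (hconc : ∀ k, 1 ≤ k → ∀ δ, 1 ≤ δ → δ ≤ d - 1 →
      γ (d * k - δ) + γ (d * k + δ) ≤ 2 * γ (d * k)) :
    (∑ k ∈ Icc 1 (n * d), ∑ l ∈ Icc 1 (n * d), γ (1 * ((k : ℤ) - (l : ℤ)).natAbs)) ≤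
      (d : ℝ) ^ 2 *
        (∑ k ∈ Icc 1 n, ∑ l ∈ Icc 1 n, γ (d * ((k : ℤ) - (l : ℤ)).natAbs)) ∧
    (∑ k ∈ Icc 1 (n * d), ∑ l ∈ Icc 1 (n * d), γ (1 * ((k : ℤ) - (l : ℤ)).natAbs)) /
        ((n : ℝ) * (d : ℝ)) ^ 2 ≤
      (∑ k ∈ Icc 1 n, ∑ l ∈ Icc 1 n, γ (d * ((k : ℤ) - (l : ℤ)).natAbs)) / (n : ℝ) ^ 2 :=
  full_variance_upper_bound_general γ n d hd hγ0 hconc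
end

section
/- Let X_1, X_2, …, X_{nd} be square-integrable real random variables with all expectations equal and Cov(X_i, X_j) = γ(|i−j|), where γ : ℕ → ℝ is nonnegative and nonincreasing and satisfies γ(d·k − δ) + γ(d·k + δ) ≤ 2·γ(d·k) for all integers k ≥ 1 and 1 ≤ δ ≤ d−1. Let ȳ_a = (1/(nd))·Σ_{i=1}^{nd} X_i be the average over all samples and ȳ_b = (1/n)·Σ_{k=1}^{n} X_{(k−1)d+1} the average over the coarse sample set with sampling interval d. Then Var(ȳ_b)/d ≤ Var(ȳ_a) ≤ Var(ȳ_b). (Theorem 5.2.) -/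
/-!
Write a full index as `i = k d + r + 1` with `k < n`, `r < d`. Then
`(n d)² Var ȳ_a = ∑_{k,l} B(k - l)` with the block sum `B(e) = ∑_{r,s<d} γ |d e + r - s|`, while
`n² Var ȳ_b = ∑_{k,l} γ |d (k - l)|`, so it suffices to show `d γ |d e| ≤ B(e) ≤ d² γ |d e|`.
The lower bound keeps only the diagonal `r = s` (γ ≥ 0). For the upper bound pair `(r, s)` with
`(s, r)`: the lags `|d e ± (r - s)|` straddle the multiple `|d e|` of `d`, so the concavity
condition (monotonicity when `e = 0`) bounds each pair by `2 γ |d e|`.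
-/

open MeasureTheory ProbabilityTheory Finset

theorem Finset.sum_Icc_one_eq_sum_range_s8 {M : Type*} [AddCommMonoid M] (N : ℕ) (f : ℕ → M) :
    ∑ i ∈ Icc 1 N, f i = ∑ i ∈ range N, f (i + 1) := by
  rw [range_eq_Ico, sum_Ico_add' f 0 N 1, zero_add, Ico_add_one_right_eq_Icc]

theorem Finset.sum_range_mul_eq_sum_sum_s8 {M : Type*} [AddCommMonoid M] (n d : ℕ) (f : ℕ → M) :
    ∑ i ∈ range (n * d), f i = ∑ k ∈ range n, ∑ r ∈ range d, f (k * d + r) := by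
  induction n with
  | zero => simp
  | succ n ih => rw [Nat.succ_mul, sum_range_add, ih, sum_range_succ]

theorem ProbabilityTheory.variance_const_mul_sum_eq {Ω ι : Type*} [MeasurableSpace Ω]
    {μ : Measure Ω} [IsFiniteMeasure μ] {s : Finset ι} {X : ι → Ω → ℝ} {C : ι → ι → ℝ} (c : ℝ)
    (hX : ∀ i ∈ s, MemLp (X i) 2 μ) (hC : ∀ i ∈ s, ∀ j ∈ s, cov[X i, X j; μ] = C i j) :
    Var[fun ω => c * ∑ i ∈ s, X i ω; μ] = c ^ 2 * ∑ i ∈ s, ∑ j ∈ s, C i j := by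
  rw [variance_const_mul, variance_fun_sum' hX]
  exact congrArg _ (sum_congr rfl fun i hi => sum_congr rfl fun j hj => hC i hi j hj)

section LagSums

variable {γ : ℕ → ℝ} {d : ℕ}

theorem lag_add_add_lag_sub_le (hanti : Antitone γ)
    (hconc : ∀ k, 1 ≤ k → ∀ δ, 1 ≤ δ → δ ≤ d - 1 →
      γ (d * k - δ) + γ (d * k + δ) ≤ 2 * γ (d * k))
    (e δ : ℤ) (hδ : δ.natAbs < d) :
    γ ((d : ℤ) * e + δ).natAbs + γ ((d : ℤ) * e - δ).natAbs ≤ 2 * γ ((d : ℤ) * e).natAbs := by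
  rcases eq_or_ne e 0 with rfl | he
  · have := hanti (Nat.zero_le δ.natAbs)
    simp only [mul_zero, zero_add, zero_sub, Int.natAbs_neg, Int.natAbs_zero]
    linarith
  rcases eq_or_ne δ 0 with rfl | hδ0
  · simp only [add_zero, sub_zero, two_mul, le_refl]
  have hde : ((d : ℤ) * e).natAbs = d * e.natAbs := by rw [Int.natAbs_mul, Int.natAbs_natCast]
  have hc := hconc e.natAbs (by omega) δ.natAbs (by omega) (by omega)
  rw [← hde] at hc
  have hle : δ.natAbs ≤ ((d : ℤ) * e).natAbs := by
    rw [hde]; nlinarith [Int.natAbs_pos.2 he]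
  generalize (d : ℤ) * e = E at hle hc ⊢
  obtain ⟨h₁, h₂⟩ | ⟨h₁, h₂⟩ :
      ((E + δ).natAbs = E.natAbs + δ.natAbs ∧ (E - δ).natAbs = E.natAbs - δ.natAbs) ∨
      ((E + δ).natAbs = E.natAbs - δ.natAbs ∧ (E - δ).natAbs = E.natAbs + δ.natAbs) := by
    omega
  all_goals rw [h₁, h₂]; linarith

variable (γ d) in
def blockLagSum (e : ℤ) : ℝ :=
  ∑ r ∈ range d, ∑ s ∈ range d, γ ((d : ℤ) * e + r - s).natAbs

theorem mul_le_blockLagSum (hpos : ∀ t, 0 ≤ γ t) (e : ℤ) :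
    d * γ ((d : ℤ) * e).natAbs ≤ blockLagSum γ d e := by
  have hconst : (d : ℝ) * γ ((d : ℤ) * e).natAbs = ∑ _r ∈ range d, γ ((d : ℤ) * e).natAbs := by
    simp
  rw [hconst, blockLagSum]
  refine sum_le_sum fun r hr => ?_
  calc γ ((d : ℤ) * e).natAbs = γ ((d : ℤ) * e + r - r).natAbs := by rw [add_sub_cancel_right]
    _ ≤ ∑ s ∈ range d, γ ((d : ℤ) * e + r - s).natAbs :=
      single_le_sum (f := fun s : ℕ => γ ((d : ℤ) * e + r - s).natAbs)
        (fun _ _ => hpos _) hr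

theorem blockLagSum_le_sq_mul (hanti : Antitone γ)
    (hconc : ∀ k, 1 ≤ k → ∀ δ, 1 ≤ δ → δ ≤ d - 1 →
      γ (d * k - δ) + γ (d * k + δ) ≤ 2 * γ (d * k)) (e : ℤ) :
    blockLagSum γ d e ≤ d ^ 2 * γ ((d : ℤ) * e).natAbs := by
  have hpair : ∀ r ∈ range d, ∀ s ∈ range d,
      γ ((d : ℤ) * e + r - s).natAbs + γ ((d : ℤ) * e + s - r).natAbs
        ≤ 2 * γ ((d : ℤ) * e).natAbs := by
    intro r hr s hs
    rw [mem_range] at hr hs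
    have := lag_add_add_lag_sub_le hanti hconc e (r - s) (by omega)
    rwa [← add_sub_assoc, sub_sub_eq_add_sub] at this
  calc blockLagSum γ d e
      = (∑ r ∈ range d, ∑ s ∈ range d,
          (γ ((d : ℤ) * e + r - s).natAbs + γ ((d : ℤ) * e + s - r).natAbs)) / 2 := by
        rw [blockLagSum, eq_div_iff two_ne_zero]
        simp only [sum_add_distrib]
        rw [mul_two]
        congr 1
        exact sum_comm
    _ ≤ (∑ r ∈ range d, ∑ s ∈ range d, 2 * γ ((d : ℤ) * e).natAbs) / 2 := by
        gcongr with r hr s hs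
        exact hpair r hr s hs
    _ = d ^ 2 * γ ((d : ℤ) * e).natAbs := by
        simp only [sum_const, card_range, nsmul_eq_mul]
        ring

theorem sum_Icc_sum_Icc_natAbs_sub_eq_sum_blockLagSum (n : ℕ) :
    ∑ i ∈ Icc 1 (n * d), ∑ j ∈ Icc 1 (n * d), γ ((i : ℤ) - j).natAbs
      = ∑ k ∈ range n, ∑ l ∈ range n, blockLagSum γ d (k - l) := by
  simp only [sum_Icc_one_eq_sum_range_s8, sum_range_mul_eq_sum_sum_s8, blockLagSum]
  refine sum_congr rfl fun k _ => ?_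
  rw [sum_comm]
  refine sum_congr rfl fun l _ => sum_congr rfl fun r _ => sum_congr rfl fun s _ => ?_
  congr 2
  push_cast
  ring

theorem sum_Icc_sum_Icc_natAbs_coarse_sub_eq (n : ℕ) :
    ∑ k ∈ Icc 1 n, ∑ l ∈ Icc 1 n, γ ((((k - 1) * d + 1 : ℕ) : ℤ) - ((l - 1) * d + 1 : ℕ)).natAbs
      = ∑ k ∈ range n, ∑ l ∈ range n, γ ((d : ℤ) * (k - l)).natAbs := by
  simp only [sum_Icc_one_eq_sum_range_s8, Nat.add_sub_cancel]
  refine sum_congr rfl fun k _ => sum_congr rfl fun l _ => ?_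
  congr 2
  push_cast
  ring

end LagSums

theorem coarse_full_variance_bounds_general
    {Ω : Type*} [MeasurableSpace Ω] (μ : Measure Ω) [IsProbabilityMeasure μ]
    (n d : ℕ) (hd : 1 ≤ d) (X : ℕ → Ω → ℝ) (γ : ℕ → ℝ)
    (hL2 : ∀ i ∈ Icc 1 (n * d), MemLp (X i) 2 μ)
    (hcov : ∀ i ∈ Icc 1 (n * d), ∀ j ∈ Icc 1 (n * d),
      ∫ ω, (X i ω - ∫ ω', X i ω' ∂μ) * (X j ω - ∫ ω', X j ω' ∂μ) ∂μ
        = γ (((i : ℤ) - (j : ℤ)).natAbs))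
    (hγpos : ∀ t, 0 ≤ γ t) (hγanti : Antitone γ)
    (hconc : ∀ k, 1 ≤ k → ∀ δ, 1 ≤ δ → δ ≤ d - 1 →
      γ (d * k - δ) + γ (d * k + δ) ≤ 2 * γ (d * k)) :
    variance (fun ω => (1 / (n : ℝ)) * ∑ k ∈ Icc 1 n, X ((k - 1) * d + 1) ω) μ / (d : ℝ)
        ≤ variance (fun ω => (1 / ((n : ℝ) * (d : ℝ))) * ∑ i ∈ Icc 1 (n * d), X i ω) μ ∧
      variance (fun ω => (1 / ((n : ℝ) * (d : ℝ))) * ∑ i ∈ Icc 1 (n * d), X i ω) μ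
        ≤ variance (fun ω => (1 / (n : ℝ)) * ∑ k ∈ Icc 1 n, X ((k - 1) * d + 1) ω) μ := by
  have hcoarse : ∀ k ∈ Icc 1 n, (k - 1) * d + 1 ∈ Icc 1 (n * d) := by
    intro k hk
    rw [mem_Icc] at hk ⊢
    exact ⟨by omega, by nlinarith [Nat.sub_add_cancel hk.1]⟩
  set SA := ∑ k ∈ range n, ∑ l ∈ range n, blockLagSum γ d (k - l)
  set SB := ∑ k ∈ range n, ∑ l ∈ range n, γ ((d : ℤ) * (k - l)).natAbs
  have hVa : variance (fun ω => (1 / ((n : ℝ) * (d : ℝ))) * ∑ i ∈ Icc 1 (n * d), X i ω) μ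
      = (1 / ((n : ℝ) * (d : ℝ))) ^ 2 * SA := by
    rw [variance_const_mul_sum_eq _ hL2 hcov, sum_Icc_sum_Icc_natAbs_sub_eq_sum_blockLagSum]
  have hVb : variance (fun ω => (1 / (n : ℝ)) * ∑ k ∈ Icc 1 n, X ((k - 1) * d + 1) ω) μ
      = (1 / (n : ℝ)) ^ 2 * SB := by
    rw [variance_const_mul_sum_eq (X := fun k => X ((k - 1) * d + 1)) _
      (fun k hk => hL2 _ (hcoarse k hk)) (fun k hk l hl => hcov _ (hcoarse k hk) _ (hcoarse l hl)),
      sum_Icc_sum_Icc_natAbs_coarse_sub_eq]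
  have hlow : d * SB ≤ SA := by
    simp only [SA, SB, mul_sum]
    gcongr with k _ l _
    exact mul_le_blockLagSum hγpos _
  have hup : SA ≤ d ^ 2 * SB := by
    simp only [SA, SB, mul_sum]
    gcongr with k _ l _
    exact blockLagSum_le_sq_mul hγanti hconc _
  have hd0 : (d : ℝ) ≠ 0 := Nat.cast_ne_zero.2 (by omega)
  rw [hVa, hVb]
  constructor
  · calc (1 / (n : ℝ)) ^ 2 * SB / d = (1 / ((n : ℝ) * d)) ^ 2 * (d * SB) := by field_simp
      _ ≤ _ := by gcongr
  · calc (1 / ((n : ℝ) * d)) ^ 2 * SA ≤ (1 / ((n : ℝ) * d)) ^ 2 * (d ^ 2 * SB) := by gcongr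
      _ = _ := by field_simp

/-- Theorem 5.2: for a stationary sequence `X_1, …, X_{nd}` with nonnegative,
nonincreasing autocovariance `γ` satisfying the per-interval concavity condition,
the variance of the coarse average `ȳ_b = (1/n)·Σ_k X_{(k−1)d+1}` and the variance
of the full average `ȳ_a = (1/(nd))·Σ_i X_i` satisfy
`Var(ȳ_b)/d ≤ Var(ȳ_a) ≤ Var(ȳ_b)`. -/
theorem coarse_full_variance_bounds
    {Ω : Type*} [MeasurableSpace Ω] (μ : Measure Ω) [IsProbabilityMeasure μ]
    (n d : ℕ) (hn : 1 ≤ n) (hd : 1 ≤ d) (X : ℕ → Ω → ℝ) (γ : ℕ → ℝ)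
    (hL2 : ∀ i ∈ Icc 1 (n * d), MemLp (X i) 2 μ)
    (hmean : ∀ i ∈ Icc 1 (n * d), ∀ j ∈ Icc 1 (n * d),
      ∫ ω, X i ω ∂μ = ∫ ω, X j ω ∂μ)
    (hcov : ∀ i ∈ Icc 1 (n * d), ∀ j ∈ Icc 1 (n * d),
      ∫ ω, (X i ω - ∫ ω', X i ω' ∂μ) * (X j ω - ∫ ω', X j ω' ∂μ) ∂μ
        = γ (((i : ℤ) - (j : ℤ)).natAbs))
    (hγpos : ∀ t, 0 ≤ γ t) (hγanti : Antitone γ)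
    (hconc : ∀ k, 1 ≤ k → ∀ δ, 1 ≤ δ → δ ≤ d - 1 →
      γ (d * k - δ) + γ (d * k + δ) ≤ 2 * γ (d * k)) :
    variance (fun ω => (1 / (n : ℝ)) * ∑ k ∈ Icc 1 n, X ((k - 1) * d + 1) ω) μ / (d : ℝ)
        ≤ variance (fun ω => (1 / ((n : ℝ) * (d : ℝ))) * ∑ i ∈ Icc 1 (n * d), X i ω) μ ∧
      variance (fun ω => (1 / ((n : ℝ) * (d : ℝ))) * ∑ i ∈ Icc 1 (n * d), X i ω) μ
        ≤ variance (fun ω => (1 / (n : ℝ)) * ∑ k ∈ Icc 1 n, X ((k - 1) * d + 1) ω) μ :=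
  coarse_full_variance_bounds_general μ n d hd X γ hL2 hcov hγpos hγanti hconc
end
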